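/- The quotient of M by the cyclic A-submodule generated by the single element s₁ + s₂ is a free ℂ[t]-module with basis the images of s₁ and s₀. -/

import Mathlib

open MvPolynomial

noncomputable section

/-- The polynomial ring `ℂ[t,z₁,z₂,θ₁,θ₂]`:
variables `X 0 = t`, `X 1 = z₁`, `X 2 = z₂`, `X 3 = θ₁`, `X 4 = θ₂`. -/
abbrev P5 : Type := MvPolynomial (Fin 5) ℂ

/-- The ideal `(z₁z₂ + t², z₁θ₂ − tθ₁, z₂θ₁ + tθ₂, θ₁θ₂, θ₁², θ₂²)` of relations
of Deligne's miniversal deformation of the NS node. -/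
def nsIdeal : Ideal P5 :=
  Ideal.span {X 1 * X 2 + X 0 ^ 2, X 1 * X 4 - X 0 * X 3, X 2 * X 3 + X 0 * X 4,
    X 3 * X 4, X 3 ^ 2, X 4 ^ 2}

/-- The coordinate ring `A` of Deligne's miniversal deformation of the NS node. -/
abbrev ANode : Type := P5 ⧸ nsIdeal

/-- `t̄ ∈ A`. -/
def tb : ANode := Ideal.Quotient.mk nsIdeal (X 0)
/-- `z̄₁ ∈ A`. -/
def z1 : ANode := Ideal.Quotient.mk nsIdeal (X 1)
/-- `z̄₂ ∈ A`. -/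
def z2 : ANode := Ideal.Quotient.mk nsIdeal (X 2)
/-- `θ̄₁ ∈ A`. -/
def th1 : ANode := Ideal.Quotient.mk nsIdeal (X 3)
/-- `θ̄₂ ∈ A`. -/
def th2 : ANode := Ideal.Quotient.mk nsIdeal (X 4)

/-- `A` as a `ℂ[t]`-algebra via `t ↦ t̄`. -/
instance : Algebra (Polynomial ℂ) ANode := (Polynomial.aeval tb).toRingHom.toAlgebra


set_option synthInstance.maxHeartbeats 400000
set_option maxHeartbeats 1000000

/-- The standard generators of the free module `A³`. -/
def ee (i : Fin 3) : Fin 3 → ANode := Pi.single i 1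

/-- The relation vectors defining the local model `M` of the dualizing sheaf `ω_{X/S}`:
generators `s₁ = ee 0`, `s₂ = ee 1`, `s₀ = ee 2`; relations `z₁s₂ = ts₁`, `z₂s₁ = −ts₂`,
`θ₁s₂ = ts₀`, `θ₂s₁ = ts₀`, `z₁s₀ = θ₁s₁`, `z₂s₀ = −θ₂s₂`, `θ₁s₀ = 0`, `θ₂s₀ = 0`. -/
def omegaRels : Set (Fin 3 → ANode) :=
  { z1 • ee 1 - tb • ee 0,
    z2 • ee 0 + tb • ee 1,
    th1 • ee 1 - tb • ee 2,
    th2 • ee 0 - tb • ee 2,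
    z1 • ee 2 - th1 • ee 0,
    z2 • ee 2 + th2 • ee 1,
    th1 • ee 2,
    th2 • ee 2 }

/-- The submodule of relations. -/
def omegaRelMod : Submodule ANode (Fin 3 → ANode) := Submodule.span ANode omegaRels

/-- The local model `M` of the relative dualizing sheaf `ω_{X/S}`. -/
abbrev M : Type := (Fin 3 → ANode) ⧸ omegaRelMod

/-- The generators of `M`: `s 0 = s₁`, `s 1 = s₂`, `s 2 = s₀`. -/
def s (i : Fin 3) : M := Submodule.Quotient.mk (ee i)

/-- The cyclic submodule `A·(s₁ + s₂)` of `M` (local model of the image of the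
section `s = s₁ + s₂`). -/
def secSub : Submodule ANode M := Submodule.span ANode {s 0 + s 1}

/-- The claimed `ℂ[t]`-basis of `M/A·(s₁+s₂)`: the images of `s₁` and `s₀`. -/
def fhatBasis : Fin 2 → M ⧸ secSub :=
  ![Submodule.Quotient.mk (s 0), Submodule.Quotient.mk (s 2)]

/-! The images `u, w` of `s₁, s₀` generate `M/(s₁ + s₂)` over `A`, since `s₂ ≡ -s₁`, and the
relations of `M` show that the generators `z₁, z₂, θ₁, θ₂` of `A` over `ℂ[t]` act on them exactly
as `-t, t, -tε, tε` act on `1, ε` in the dual numbers `ℂ[t][ε]`. So the `ℂ[t]`-span of `u, w` is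
an `A`-submodule, hence everything. Conversely `t, z₁, z₂, θ₁, θ₂ ↦ t, -t, t, -tε, tε` is a ring
map `A → ℂ[t][ε]`, and `s₁, s₂, s₀ ↦ 1, -1, ε` respects all relations and kills `s₁ + s₂`; the
induced `A`-linear map sends `u, w` to the `ℂ[t]`-basis `1, ε`, which gives independence. -/

theorem Submodule.span_eq_top_of_adjoin_eq_top {R A M ι : Type*} [CommSemiring R] [Semiring A]
    [Algebra R A] [AddCommMonoid M] [Module R M] [Module A M] [IsScalarTower R A M]
    {S : Set A} (hS : Algebra.adjoin R S = ⊤) {b : ι → M}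
    (hb : ∀ g ∈ S, ∀ j, g • b j ∈ span R (Set.range b))
    (hspan : span A (Set.range b) = ⊤) :
    span R (Set.range b) = ⊤ := by
  set N := span R (Set.range b)
  have smul_mem (a : A) : ∀ x ∈ N, a • x ∈ N := by
    induction (hS ▸ Algebra.mem_top : a ∈ Algebra.adjoin R S) using Algebra.adjoin_induction with
    | mem g hg =>
      intro x hx
      induction hx using span_induction with
      | mem x hx => obtain ⟨j, rfl⟩ := hx; exact hb g hg j
      | zero => simp
      | add x y _ _ hx hy => rw [smul_add]; exact add_mem hx hy
      | smul r x _ hx => rw [smul_comm]; exact N.smul_mem r hx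
    | algebraMap r => intro x hx; rw [algebraMap_smul]; exact N.smul_mem r hx
    | add a a' _ _ ha ha' => intro x hx; rw [add_smul]; exact add_mem (ha x hx) (ha' x hx)
    | mul a a' _ _ ha ha' => intro x hx; rw [mul_smul]; exact ha _ (ha' x hx)
  let N' : Submodule A M := { N with smul_mem' := smul_mem }
  refine eq_top_iff.2 fun x _ => ?_
  have hx : x ∈ span A (Set.range b) := hspan ▸ mem_top
  exact (span_le (p := N')).2 subset_span hx

theorem DualNumber.linearIndependent_one_eps {R : Type*} [Ring R] :
    LinearIndependent R ![1, (eps : DualNumber R)] := by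
  rw [LinearIndependent.pair_iff]
  intro p q h
  exact ⟨by simpa using congrArg TrivSqZeroExt.fst h, by simpa using congrArg TrivSqZeroExt.snd h⟩

abbrev DualPoly : Type := DualNumber (Polynomial ℂ)

local notation "τ" => (TrivSqZeroExt.inl (Polynomial.X : Polynomial ℂ) : DualPoly)
local notation "ε" => (DualNumber.eps (R := Polynomial ℂ))

def dualEval : P5 →ₐ[ℂ] DualPoly := aeval ![τ, -τ, τ, -(τ * ε), τ * ε]

theorem nsIdeal_le_ker_dualEval : nsIdeal ≤ RingHom.ker dualEval := by
  have eps_sq : ε ^ 2 = 0 := by rw [sq, DualNumber.eps_mul_eps]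
  rw [nsIdeal, Ideal.span_le]
  rintro g (rfl | rfl | rfl | rfl | rfl | rfl) <;>
    simp only [SetLike.mem_coe, RingHom.mem_ker, dualEval, map_add, map_sub, map_mul, map_pow,
      aeval_X, Fin.isValue, Matrix.cons_val] <;>
    ring_nf <;> simp [eps_sq]

def nodeToDual : ANode →ₐ[ℂ] DualPoly :=
  Ideal.Quotient.liftₐ nsIdeal dualEval fun _ ha => nsIdeal_le_ker_dualEval ha

instance : Algebra ANode DualPoly := nodeToDual.toRingHom.toAlgebra

theorem nodeToDual_mk (p : P5) : nodeToDual (Ideal.Quotient.mk nsIdeal p) = dualEval p := rfl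

instance : IsScalarTower (Polynomial ℂ) ANode DualPoly :=
  .of_algebraMap_eq' <| congrArg AlgHom.toRingHom <|
    Polynomial.algHom_ext (f := IsScalarTower.toAlgHom ℂ _ _)
      (g := nodeToDual.comp (Polynomial.aeval tb))
      (by simp [tb, nodeToDual_mk, dualEval, TrivSqZeroExt.algebraMap_eq_inl])

def omegaToDual : M →ₗ[ANode] DualPoly :=
  omegaRelMod.liftQ (Fintype.linearCombination ANode ![1, -1, ε]) <| by
    rw [omegaRelMod, Submodule.span_le]
    rintro v (rfl | rfl | rfl | rfl | rfl | rfl | rfl | rfl) <;>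
      simp [ee, Algebra.smul_def, RingHom.algebraMap_toAlgebra, tb, z1, z2, th1, th2,
        nodeToDual_mk, dualEval, mul_assoc]

theorem omegaToDual_s (i : Fin 3) : omegaToDual (s i) = ![1, -1, ε] i := by
  simp [omegaToDual, s, ee, Fintype.linearCombination_apply_single]

def fhatToDual : M ⧸ secSub →ₗ[ANode] DualPoly :=
  secSub.liftQ omegaToDual <| by
    rw [secSub, Submodule.span_le, Set.singleton_subset_iff]
    simp [omegaToDual_s]

theorem fhatToDual_comp_fhatBasis : fhatToDual ∘ fhatBasis = ![1, ε] := by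
  funext i; fin_cases i <;> simp [fhatToDual, fhatBasis, omegaToDual_s]

theorem linearIndependent_fhatBasis : LinearIndependent (Polynomial ℂ) fhatBasis :=
  .of_comp (fhatToDual.restrictScalars (Polynomial ℂ)) <| by
    rw [LinearMap.coe_restrictScalars, fhatToDual_comp_fhatBasis]
    exact DualNumber.linearIndependent_one_eps

def fhatMk : (Fin 3 → ANode) →ₗ[ANode] M ⧸ secSub := secSub.mkQ ∘ₗ omegaRelMod.mkQ

theorem fhatMk_surjective : Function.Surjective fhatMk :=
  (Submodule.mkQ_surjective _).comp (Submodule.mkQ_surjective _)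

theorem fhatMk_ee_zero : fhatMk (ee 0) = fhatBasis 0 := rfl

theorem fhatMk_ee_two : fhatMk (ee 2) = fhatBasis 1 := rfl

theorem fhatMk_ee_one : fhatMk (ee 1) = -fhatBasis 0 := by
  rw [← fhatMk_ee_zero, eq_neg_iff_add_eq_zero, ← map_add, add_comm]
  exact (Submodule.Quotient.mk_eq_zero _).2 (Submodule.subset_span rfl)

theorem fhatMk_eq_zero_of_mem_omegaRels {v : Fin 3 → ANode} (hv : v ∈ omegaRels) :
    fhatMk v = 0 := by
  have hv' : omegaRelMod.mkQ v = 0 :=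
    (Submodule.Quotient.mk_eq_zero _).2 (Submodule.subset_span hv)
  rw [fhatMk, LinearMap.comp_apply, hv', map_zero]

theorem z1_smul_fhatBasis_zero : z1 • fhatBasis 0 = -(tb • fhatBasis 0) := by
  have h := fhatMk_eq_zero_of_mem_omegaRels (v := z1 • ee 1 - tb • ee 0) (by simp [omegaRels])
  simp only [map_sub, map_smul, fhatMk_ee_zero, fhatMk_ee_one] at h
  linear_combination (norm := module) -h

theorem z2_smul_fhatBasis_zero : z2 • fhatBasis 0 = tb • fhatBasis 0 := by
  have h := fhatMk_eq_zero_of_mem_omegaRels (v := z2 • ee 0 + tb • ee 1) (by simp [omegaRels])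
  simp only [map_add, map_smul, fhatMk_ee_zero, fhatMk_ee_one] at h
  linear_combination (norm := module) h

theorem th1_smul_fhatBasis_zero : th1 • fhatBasis 0 = -(tb • fhatBasis 1) := by
  have h := fhatMk_eq_zero_of_mem_omegaRels (v := th1 • ee 1 - tb • ee 2) (by simp [omegaRels])
  simp only [map_sub, map_smul, fhatMk_ee_one, fhatMk_ee_two] at h
  linear_combination (norm := module) -h

theorem th2_smul_fhatBasis_zero : th2 • fhatBasis 0 = tb • fhatBasis 1 := by
  have h := fhatMk_eq_zero_of_mem_omegaRels (v := th2 • ee 0 - tb • ee 2) (by simp [omegaRels])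
  simp only [map_sub, map_smul, fhatMk_ee_zero, fhatMk_ee_two] at h
  linear_combination (norm := module) h

theorem z1_smul_fhatBasis_one : z1 • fhatBasis 1 = -(tb • fhatBasis 1) := by
  have h := fhatMk_eq_zero_of_mem_omegaRels (v := z1 • ee 2 - th1 • ee 0) (by simp [omegaRels])
  simp only [map_sub, map_smul, fhatMk_ee_zero, fhatMk_ee_two, th1_smul_fhatBasis_zero] at h
  linear_combination (norm := module) h

theorem z2_smul_fhatBasis_one : z2 • fhatBasis 1 = tb • fhatBasis 1 := by
  have h := fhatMk_eq_zero_of_mem_omegaRels (v := z2 • ee 2 + th2 • ee 1) (by simp [omegaRels])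
  simp only [map_add, map_smul, fhatMk_ee_one, fhatMk_ee_two, smul_neg,
    th2_smul_fhatBasis_zero] at h
  linear_combination (norm := module) h

theorem th1_smul_fhatBasis_one : th1 • fhatBasis 1 = 0 := by
  simpa [fhatMk_ee_two] using
    fhatMk_eq_zero_of_mem_omegaRels (v := th1 • ee 2) (by simp [omegaRels])

theorem th2_smul_fhatBasis_one : th2 • fhatBasis 1 = 0 := by
  simpa [fhatMk_ee_two] using
    fhatMk_eq_zero_of_mem_omegaRels (v := th2 • ee 2) (by simp [omegaRels])

theorem algebraMap_X_eq_tb : algebraMap (Polynomial ℂ) ANode Polynomial.X = tb :=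
  Polynomial.aeval_X tb

theorem adjoin_z_th_eq_top :
    Algebra.adjoin (Polynomial ℂ) ({z1, z2, th1, th2} : Set ANode) = ⊤ := by
  rw [eq_top_iff]
  rintro a -
  obtain ⟨p, rfl⟩ := Ideal.Quotient.mk_surjective a
  induction p using MvPolynomial.induction_on with
  | C c =>
    have hc :
        Ideal.Quotient.mk nsIdeal (C c) = algebraMap (Polynomial ℂ) ANode (Polynomial.C c) :=
      (Polynomial.aeval_C tb c).symm
    exact hc ▸ Subalgebra.algebraMap_mem _ _
  | add p q hp hq => rw [map_add]; exact add_mem hp hq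
  | mul_X p i hp =>
    rw [map_mul]
    refine mul_mem hp ?_
    fin_cases i
    · change tb ∈ _
      exact algebraMap_X_eq_tb ▸ Subalgebra.algebraMap_mem _ Polynomial.X
    all_goals exact Algebra.subset_adjoin (by simp [z1, z2, th1, th2])

theorem span_fhatBasis_eq_top : Submodule.span ANode (Set.range fhatBasis) = ⊤ := by
  refine eq_top_iff.2 fun x _ => ?_
  obtain ⟨v, rfl⟩ := fhatMk_surjective x
  rw [← (Pi.basisFun ANode (Fin 3)).sum_repr v, map_sum]
  refine Submodule.sum_mem _ fun i _ => ?_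
  rw [map_smul]
  refine Submodule.smul_mem _ _ ?_
  rw [Pi.basisFun_apply]
  fin_cases i
  · exact Submodule.subset_span ⟨0, fhatMk_ee_zero.symm⟩
  · exact fhatMk_ee_one ▸ neg_mem (Submodule.subset_span ⟨0, rfl⟩)
  · exact Submodule.subset_span ⟨1, fhatMk_ee_two.symm⟩

theorem smul_fhatBasis_mem_span :
    ∀ g ∈ ({z1, z2, th1, th2} : Set ANode), ∀ j,
      g • fhatBasis j ∈ Submodule.span (Polynomial ℂ) (Set.range fhatBasis) := by
  have tb_smul_mem (j : Fin 2) :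
      tb • fhatBasis j ∈ Submodule.span (Polynomial ℂ) (Set.range fhatBasis) := by
    rw [← algebraMap_X_eq_tb, algebraMap_smul]
    exact Submodule.smul_mem _ _ (Submodule.subset_span ⟨j, rfl⟩)
  rintro g (rfl | rfl | rfl | rfl) j <;> fin_cases j <;>
    simp [z1_smul_fhatBasis_zero, z2_smul_fhatBasis_zero, th1_smul_fhatBasis_zero,
      th2_smul_fhatBasis_zero, z1_smul_fhatBasis_one, z2_smul_fhatBasis_one,
      th1_smul_fhatBasis_one, th2_smul_fhatBasis_one, tb_smul_mem]

/-- the quotient of `M` by the cyclic submodule generated by `s₁ + s₂`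
is a free `ℂ[t]`-module with basis the images of `s₁` and `s₀`. -/
theorem omega_modulo_section_free :
    LinearIndependent (Polynomial ℂ) fhatBasis ∧
      Submodule.span (Polynomial ℂ) (Set.range fhatBasis) = ⊤ :=
  ⟨linearIndependent_fhatBasis, Submodule.span_eq_top_of_adjoin_eq_top adjoin_z_th_eq_top
    smul_fhatBasis_mem_span span_fhatBasis_eq_top⟩

end
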